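/- Let f₀ : ℝ² → ℝ² be an area- and orientation-preserving diffeomorphism with a saddle connection Σ between hyperbolic fixed points a, b, parametrized by α : ℝ → Σ with f₀(α(t)) = α(t+1). Then the vector field η defined along Σ by η(α(t)) = J α′(t), where J is the standard 2×2 symplectic matrix, is an adapted normal vector field: it is nonzero, orthogonal to TΣ, and satisfies f₀*⟨η, Y⟩ = ⟨η, f₀* Y⟩ for every vector field Y : Σ → ℝ². -/

import Mathlib

/-! Differentiating `f ∘ α = α (· + 1)` gives `Df (α t) (α' t) = α' (t + 1)`, and differentiating
`f ∘ g = id` gives `Df (g p) ∘ Dg p = id`. Feeding both into the symplectic invariance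
`ω(Df u, Df v) = ω(u, v)` with `u = Dg p (Y p)`, `v = α' t` is exactly the pullback identity. -/

open Filter Topology

/-- Euclidean inner product on `ℝ²`. -/
def dot2 (u v : ℝ × ℝ) : ℝ := u.1 * v.1 + u.2 * v.2

/-- The standard `2×2` symplectic matrix `J`, so that `ω(u,v) = ⟨u, J v⟩`. -/
def Jmat (v : ℝ × ℝ) : ℝ × ℝ := (v.2, -v.1)

theorem dot2_comm (u v : ℝ × ℝ) : dot2 u v = dot2 v u := by
  unfold dot2; ring

theorem dot2_Jmat_self (v : ℝ × ℝ) : dot2 (Jmat v) v = 0 := by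
  unfold dot2 Jmat; ring

theorem Jmat_eq_zero_iff {v : ℝ × ℝ} : Jmat v = 0 ↔ v = 0 := by
  simp [Jmat, Prod.ext_iff, and_comm]

theorem fderiv_apply_fderiv_of_rightInverse {𝕜 E F : Type*} [NontriviallyNormedField 𝕜]
    [NormedAddCommGroup E] [NormedSpace 𝕜 E] [NormedAddCommGroup F] [NormedSpace 𝕜 F]
    {f : F → E} {g : E → F} {p : E} (hgf : Function.RightInverse g f)
    (hf : DifferentiableAt 𝕜 f (g p)) (hg : DifferentiableAt 𝕜 g p) (w : E) :
    fderiv 𝕜 f (g p) (fderiv 𝕜 g p w) = w := by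
  have hcomp := fderiv_comp p hf hg
  rw [hgf.comp_eq_id, fderiv_id] at hcomp
  exact (DFunLike.congr_fun hcomp w).symm

theorem fderiv_apply_deriv_of_semiconj {E : Type*} [NormedAddCommGroup E] [NormedSpace ℝ E]
    {f : E → E} {α : ℝ → E} {c t : ℝ} (hαf : ∀ s, f (α s) = α (s + c))
    (hf : DifferentiableAt ℝ f (α t)) (hα : DifferentiableAt ℝ α t) :
    fderiv ℝ f (α t) (deriv α t) = deriv α (t + c) := by
  rw [← fderiv_comp_deriv t hf hα, show f ∘ α = fun s => α (s + c) from funext hαf,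
    deriv_comp_add_const]

theorem adapted_normal_field_planar_general
    (f g : ℝ × ℝ → ℝ × ℝ)
    (hfg : Function.LeftInverse g f) (hgf : Function.RightInverse g f)
    (hfC : ContDiff ℝ 1 f) (hgC : ContDiff ℝ 1 g)
    -- `f` is symplectic: `Df^T J Df = J`, i.e. `ω(Df u, Df v) = ω(u,v)`
    (hsymp : ∀ p u v,
      dot2 (fderiv ℝ f p u) (Jmat (fderiv ℝ f p v)) = dot2 u (Jmat v))
    (α : ℝ → ℝ × ℝ) (hαC : ContDiff ℝ 1 α)
    (hα' : ∀ t, deriv α t ≠ 0)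
    (hαf : ∀ t, f (α t) = α (t + 1)) :
    ∀ t : ℝ,
      Jmat (deriv α t) ≠ 0 ∧
      dot2 (Jmat (deriv α t)) (deriv α t) = 0 ∧
      (∀ Y : ℝ × ℝ → ℝ × ℝ,
        dot2 (Jmat (deriv α (t + 1))) (Y (α (t + 1)))
          = dot2 (Jmat (deriv α t)) (fderiv ℝ g (α (t + 1)) (Y (α (t + 1))))) := by
  intro t
  refine ⟨fun h => hα' t (Jmat_eq_zero_iff.mp h), dot2_Jmat_self _, fun Y => ?_⟩
  set p := α (t + 1)
  set w := Y p
  have hfd : Differentiable ℝ f := hfC.differentiable one_ne_zero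
  have hgp : g p = α t := (congrArg g (hαf t)).symm.trans (hfg (α t))
  have hflow : fderiv ℝ f (α t) (deriv α t) = deriv α (t + 1) :=
    fderiv_apply_deriv_of_semiconj hαf (hfd _) (hαC.differentiable one_ne_zero t)
  have hinv : fderiv ℝ f (α t) (fderiv ℝ g p w) = w := by
    rw [← hgp]
    exact fderiv_apply_fderiv_of_rightInverse hgf (hfd _) (hgC.differentiable one_ne_zero p) w
  calc dot2 (Jmat (deriv α (t + 1))) w
      = dot2 (fderiv ℝ f (α t) (fderiv ℝ g p w)) (Jmat (fderiv ℝ f (α t) (deriv α t))) := by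
        rw [hinv, hflow, dot2_comm]
    _ = dot2 (fderiv ℝ g p w) (Jmat (deriv α t)) := hsymp _ _ _
    _ = dot2 (Jmat (deriv α t)) (fderiv ℝ g p w) := dot2_comm _ _

/-- Let `f` be an area- and orientation-preserving (i.e. symplectic)
diffeomorphism of `ℝ²` with a saddle connection between hyperbolic fixed points `a`,
`b`, parametrized by `α : ℝ → ℝ²` with `f(α(t)) = α(t+1)`.  Then `η(α(t)) = J α′(t)` is
an adapted normal vector field: it is nonzero, orthogonal to the tangent direction
`α′(t)` of `Σ`, and satisfies `f₀*⟨η, Y⟩ = ⟨η, f₀* Y⟩` for every vector field `Y`. -/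
theorem adapted_normal_field_planar
    (f g : ℝ × ℝ → ℝ × ℝ)
    (hfg : Function.LeftInverse g f) (hgf : Function.RightInverse g f)
    (hfC : ContDiff ℝ 1 f) (hgC : ContDiff ℝ 1 g)
    -- `f` is symplectic: `Df^T J Df = J`, i.e. `ω(Df u, Df v) = ω(u,v)`
    (hsymp : ∀ p u v,
      dot2 (fderiv ℝ f p u) (Jmat (fderiv ℝ f p v)) = dot2 u (Jmat v))
    (α : ℝ → ℝ × ℝ) (hαC : ContDiff ℝ 1 α) (hαinj : Function.Injective α)
    (hα' : ∀ t, deriv α t ≠ 0)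
    (hαf : ∀ t, f (α t) = α (t + 1))
    (a b : ℝ × ℝ) (hfa : f a = a) (hfb : f b = b)
    (hlima : Tendsto α atBot (𝓝 a)) (hlimb : Tendsto α atTop (𝓝 b)) :
    ∀ t : ℝ,
      Jmat (deriv α t) ≠ 0 ∧
      dot2 (Jmat (deriv α t)) (deriv α t) = 0 ∧
      (∀ Y : ℝ × ℝ → ℝ × ℝ,
        dot2 (Jmat (deriv α (t + 1))) (Y (α (t + 1)))
          = dot2 (Jmat (deriv α t)) (fderiv ℝ g (α (t + 1)) (Y (α (t + 1))))) :=
  adapted_normal_field_planar_general f g hfg hgf hfC hgC hsymp α hαC hα' hαf
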